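/- Fix 1 ≤ k ≤ ∞ and let F : (Ω^c_{≤k})^op → Set be a presheaf of sets on the category of closed k-dendroidal trees. Then the following are equivalent: (a) for every closed k-dendroidal tree T and every internal edge e of T, the canonical map F(T) → F(T_{≥e}) ×_{F(ē)} F(T^e) is a bijection, where the map is induced by the subtree inclusions T_{≥e} ↪ T and T^e ↪ T together with the morphisms ē → T_{≥e} and ē → T^e picking out the edge e; (b) for every closed k-dendroidal tree T with root r, the canonical map F(T) → F(C̄_r) ×_{∏_{e∈v(r)} F(ē)} ∏_{e∈v(r)} F(T_{≥e}) is a bijection, where v(r) is the set of minimal elements of {x ∈ T : x > r}, C̄_r = {r} ∪ v(r) is the rooted sub-corolla of T, and the maps are induced by the subtree inclusions C̄_r ↪ T and T_{≥e} ↪ T and the morphisms ē → C̄_r and ē → T_{≥e} picking out the edges e ∈ v(r). -/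

import Mathlib

open CategoryTheory

/-- A closed tree: a finite poset with a least element (the root) in which the set of
elements below any given element is linearly ordered. -/
structure ClosedTree where
  carrier : Type
  [po : PartialOrder carrier]
  [fin : Finite carrier]
  root : carrier
  root_le : ∀ x, root ≤ x
  below_linear : ∀ x y z : carrier, y ≤ x → z ≤ x → y ≤ z ∨ z ≤ y

attribute [instance] ClosedTree.po ClosedTree.fin

namespace ClosedTree

/-- Two edges are independent if they are incomparable. -/
def Indep (T : ClosedTree) (x y : T.carrier) : Prop :=
  ¬ x ≤ y ∧ ¬ y ≤ x

/-- A morphism of closed trees: a monotone map preserving independence. -/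
@[ext]
structure Hom (T T' : ClosedTree) where
  toFun : T.carrier → T'.carrier
  mono : Monotone toFun
  indep : ∀ x y, T.Indep x y → T'.Indep (toFun x) (toFun y)

/-- The category `Ω^c` of closed trees. -/
instance : Category ClosedTree where
  Hom := Hom
  id _ := ⟨_root_.id, monotone_id, fun _ _ h => h⟩
  comp f g := ⟨g.toFun ∘ f.toFun, g.mono.comp f.mono, fun x y h => g.indep _ _ (f.indep x y h)⟩
  id_comp _ := rfl
  comp_id _ := rfl
  assoc _ _ _ := rfl

/-- A morphism of closed trees is max-surjective if every maximal element of the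
target is in the image. -/
def MaxSurj {T T' : ClosedTree} (f : Hom T T') : Prop :=
  ∀ m : T'.carrier, IsMax m → ∃ e : T.carrier, f.toFun e = m

/-- A morphism of closed trees is rooted if it sends the root to the root. -/
def Rooted {T T' : ClosedTree} (f : Hom T T') : Prop :=
  f.toFun T.root = T'.root

/-- A morphism of closed trees is a subtree inclusion if it is injective with convex image. -/
def SubtreeIncl {T T' : ClosedTree} (f : Hom T T') : Prop :=
  Function.Injective f.toFun ∧
  ∀ (a b : T.carrier) (y : T'.carrier), f.toFun a ≤ y → y ≤ f.toFun b → y ∈ Set.range f.toFun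

/-- The valence of an edge: the number of minimal elements of `{x | e < x}`. -/
noncomputable def valence (T : ClosedTree) (e : T.carrier) : ℕ :=
  Set.ncard {x : T.carrier | Minimal (fun y => e < y) x}

/-- A closed tree is `k`-dendroidal if every edge has valence at most `k`. -/
def IsDendroidal (k : ℕ∞) (T : ClosedTree) : Prop :=
  ∀ e : T.carrier, (T.valence e : ℕ∞) ≤ k

end ClosedTree

namespace ClosedTree

/-- The upper subtree `T_{≥e}`: the closed tree of edges above `e`, with root `e`. -/
def upTree (T : ClosedTree) (e : T.carrier) : ClosedTree where
  carrier := {x : T.carrier // e ≤ x}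
  root := ⟨e, le_refl e⟩
  root_le x := x.prop
  below_linear x y z hy hz := T.below_linear x.val y.val z.val hy hz

/-- The lower subtree `T^e`: the closed tree of edges not strictly above `e`. -/
def downTree (T : ClosedTree) (e : T.carrier) : ClosedTree where
  carrier := {x : T.carrier // ¬ e < x}
  root := ⟨T.root, fun h => absurd (h.trans_le (T.root_le e)) (lt_irrefl e)⟩
  root_le x := T.root_le x.val
  below_linear x y z hy hz := T.below_linear x.val y.val z.val hy hz

/-- The closed sub-corolla `C̄_r = {r} ∪ v(r)` of a closed tree at its root. -/
def corollaTree (T : ClosedTree) : ClosedTree where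
  carrier := {x : T.carrier // x = T.root ∨ Minimal (fun y => T.root < y) x}
  root := ⟨T.root, Or.inl rfl⟩
  root_le x := T.root_le x.val
  below_linear x y z hy hz := T.below_linear x.val y.val z.val hy hz

/-- The closed tree `ē` with a single edge. -/
def edgeTree : ClosedTree where
  carrier := PUnit
  root := PUnit.unit
  root_le x := le_refl _
  below_linear x y z _ _ := Or.inl (le_of_eq (Subsingleton.elim y z))

theorem valence_upTree (T : ClosedTree) (e : T.carrier) (x : (upTree T e).carrier) :
    (upTree T e).valence x = T.valence x.val := by
  have himg : Subtype.val '' {z : (upTree T e).carrier | Minimal (fun y => x < y) z}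
      = {z : T.carrier | Minimal (fun y => x.val < y) z} := by
    ext z
    simp only [Set.mem_image, Set.mem_setOf_eq]
    constructor
    · rintro ⟨w, hw, rfl⟩
      refine ⟨Subtype.coe_lt_coe.mpr hw.1, ?_⟩
      intro y hy hyw
      have hyu : e ≤ y := x.prop.trans hy.le
      have h1 : x < (⟨y, hyu⟩ : (upTree T e).carrier) := Subtype.coe_lt_coe.mp hy
      have h2 : (⟨y, hyu⟩ : (upTree T e).carrier) ≤ w := hyw
      exact Subtype.coe_le_coe.mpr (hw.2 h1 h2)
    · intro hz
      have hze : e ≤ z := x.prop.trans hz.1.le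
      refine ⟨⟨z, hze⟩, ⟨Subtype.coe_lt_coe.mp hz.1, ?_⟩, rfl⟩
      intro w hw hwz
      exact Subtype.coe_le_coe.mp (hz.2 (Subtype.coe_lt_coe.mpr hw) hwz)
  show Set.ncard _ = Set.ncard _
  rw [← himg, Set.ncard_image_of_injective _ Subtype.val_injective]
  rfl

theorem upTree_isDendroidal {k : ℕ∞} {T : ClosedTree} (hT : IsDendroidal k T)
    (e : T.carrier) : IsDendroidal k (upTree T e) := by
  intro x
  rw [valence_upTree]
  exact hT x.val

theorem valence_downTree_le (T : ClosedTree) (e : T.carrier) (x : (downTree T e).carrier) :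
    (downTree T e).valence x ≤ T.valence x.val := by
  have hsub : Subtype.val '' {z : (downTree T e).carrier | Minimal (fun y => x < y) z}
      ⊆ {z : T.carrier | Minimal (fun y => x.val < y) z} := by
    rintro _ ⟨w, hw, rfl⟩
    refine ⟨Subtype.coe_lt_coe.mpr hw.1, ?_⟩
    intro y hy hyw
    have hyd : ¬ e < y := fun hc => w.prop (lt_of_lt_of_le hc hyw)
    have h1 : x < (⟨y, hyd⟩ : (downTree T e).carrier) := Subtype.coe_lt_coe.mp hy
    have h2 : (⟨y, hyd⟩ : (downTree T e).carrier) ≤ w := hyw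
    exact Subtype.coe_le_coe.mpr (hw.2 h1 h2)
  calc (downTree T e).valence x
      = (Subtype.val '' {z : (downTree T e).carrier | Minimal (fun y => x < y) z}).ncard :=
        (Set.ncard_image_of_injective _ Subtype.val_injective).symm
    _ ≤ T.valence x.val := Set.ncard_le_ncard hsub (Set.toFinite _)

theorem downTree_isDendroidal {k : ℕ∞} {T : ClosedTree} (hT : IsDendroidal k T)
    (e : T.carrier) : IsDendroidal k (downTree T e) := by
  intro x
  exact le_trans (Nat.cast_le.mpr (valence_downTree_le T e x)) (hT x.val)

theorem corollaTree_isDendroidal {k : ℕ∞} {T : ClosedTree} (hT : IsDendroidal k T) :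
    IsDendroidal k (corollaTree T) := by
  intro x
  rcases x.prop with hx | hx
  · -- `x` is the root of the corolla
    have hsub : Subtype.val '' {z : (corollaTree T).carrier | Minimal (fun y => x < y) z}
        ⊆ {z : T.carrier | Minimal (fun y => x.val < y) z} := by
      rintro _ ⟨w, hw, rfl⟩
      rcases w.prop with hw' | hw'
      · exact absurd (hx ▸ hw' ▸ Subtype.coe_lt_coe.mpr hw.1) (lt_irrefl _)
      · refine ⟨Subtype.coe_lt_coe.mpr hw.1, ?_⟩
        intro y hy hyw
        exact hw'.2 (hx ▸ hy) hyw
    have hle : (corollaTree T).valence x ≤ T.valence x.val := by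
      calc (corollaTree T).valence x
          = (Subtype.val ''
              {z : (corollaTree T).carrier | Minimal (fun y => x < y) z}).ncard :=
            (Set.ncard_image_of_injective _ Subtype.val_injective).symm
        _ ≤ T.valence x.val := Set.ncard_le_ncard hsub (Set.toFinite _)
    exact le_trans (Nat.cast_le.mpr hle) (hT x.val)
  · -- `x` is a child of the root: nothing lies above `x` in the corolla
    have hempty : {z : (corollaTree T).carrier | Minimal (fun y => x < y) z} = ∅ := by
      ext z
      simp only [Set.mem_setOf_eq, Set.mem_empty_iff_false, iff_false]
      intro hz
      have hxz : x.val < z.val := Subtype.coe_lt_coe.mpr hz.1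
      rcases z.prop with hz' | hz'
      · rw [hz'] at hxz
        exact absurd hxz (not_lt_of_ge (T.root_le x.val))
      · exact absurd hxz (not_lt_of_ge (hz'.2 hx.1 hxz.le))
    show ((Set.ncard _ : ℕ) : ℕ∞) ≤ k
    rw [show {z : (corollaTree T).carrier | Minimal (fun y => x < y) z} = ∅ from hempty,
      Set.ncard_empty]
    simp

theorem edgeTree_isDendroidal {k : ℕ∞} : IsDendroidal k edgeTree := by
  intro e
  have hempty : {x : edgeTree.carrier | Minimal (fun y => e < y) x} = ∅ := by
    ext z
    simp only [Set.mem_setOf_eq, Set.mem_empty_iff_false, iff_false]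
    intro hz
    exact lt_irrefl e hz.1
  show ((Set.ncard _ : ℕ) : ℕ∞) ≤ k
  rw [hempty, Set.ncard_empty]
  simp

/-- The subtree inclusion `T_{≥e} ↪ T`. -/
def upIncl (T : ClosedTree) (e : T.carrier) : Hom (upTree T e) T where
  toFun := Subtype.val
  mono _ _ h := h
  indep _ _ h := h

/-- The subtree inclusion `T^e ↪ T`. -/
def downIncl (T : ClosedTree) (e : T.carrier) : Hom (downTree T e) T where
  toFun := Subtype.val
  mono _ _ h := h
  indep _ _ h := h

/-- The subtree inclusion `C̄_r ↪ T`. -/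
def corollaIncl (T : ClosedTree) : Hom (corollaTree T) T where
  toFun := Subtype.val
  mono _ _ h := h
  indep _ _ h := h

/-- The morphism `ē → X` picking out the edge `x`. -/
def pick (X : ClosedTree) (x : X.carrier) : Hom edgeTree X where
  toFun _ := x
  mono _ _ _ := le_refl x
  indep a b h := (h.1 (le_refl a)).elim

end ClosedTree

open ClosedTree

/-- The category `Ω^c_{≤k}` of closed `k`-dendroidal trees. -/
abbrev OmegaCK (k : ℕ∞) := ObjectProperty.FullSubcategory (fun T : ClosedTree => IsDendroidal k T)

namespace OmegaCK

variable (k : ℕ∞)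

def upObj (T : OmegaCK k) (e : T.obj.carrier) : OmegaCK k :=
  ⟨upTree T.obj e, upTree_isDendroidal T.property e⟩

def downObj (T : OmegaCK k) (e : T.obj.carrier) : OmegaCK k :=
  ⟨downTree T.obj e, downTree_isDendroidal T.property e⟩

def corObj (T : OmegaCK k) : OmegaCK k :=
  ⟨corollaTree T.obj, corollaTree_isDendroidal T.property⟩

def edgeObj : OmegaCK k := ⟨edgeTree, edgeTree_isDendroidal⟩

def upHom (T : OmegaCK k) (e : T.obj.carrier) : upObj k T e ⟶ T := ObjectProperty.homMk (upIncl T.obj e)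

def downHom (T : OmegaCK k) (e : T.obj.carrier) : downObj k T e ⟶ T := ObjectProperty.homMk (downIncl T.obj e)

def corHom (T : OmegaCK k) : corObj k T ⟶ T := ObjectProperty.homMk (corollaIncl T.obj)

/-- `ē → T_{≥e}` picking out the edge `e` (the root of `T_{≥e}`). -/
def edgeToUp (T : OmegaCK k) (e : T.obj.carrier) : edgeObj k ⟶ upObj k T e :=
  ObjectProperty.homMk (pick (upTree T.obj e) (upTree T.obj e).root)

/-- `ē → T^e` picking out the edge `e`. -/
def edgeToDown (T : OmegaCK k) (e : T.obj.carrier) : edgeObj k ⟶ downObj k T e :=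
  ObjectProperty.homMk (pick (downTree T.obj e) ⟨e, lt_irrefl e⟩)

/-- `ē → C̄_r` picking out the child `c` of the root. -/
def edgeToCor (T : OmegaCK k) (c : T.obj.carrier)
    (hc : Minimal (fun y => T.obj.root < y) c) : edgeObj k ⟶ corObj k T :=
  ObjectProperty.homMk (pick (corollaTree T.obj) ⟨c, Or.inr hc⟩)

end OmegaCK

open OmegaCK Opposite

/-- The canonical comparison map `F(T) → F(T_{≥e}) ×_{F(ē)} F(T^e)` of a presheaf of sets
on `Ω^c_{≤k}`, for an edge `e` of a closed `k`-dendroidal tree `T`. -/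
def cutMap (k : ℕ∞) (F : (OmegaCK k)ᵒᵖ ⥤ Type) (T : OmegaCK k) (e : T.obj.carrier) :
    F.obj (op T) →
      {p : F.obj (op (upObj k T e)) × F.obj (op (downObj k T e)) //
        F.map (edgeToUp k T e).op p.1 = F.map (edgeToDown k T e).op p.2} :=
  fun t => ⟨(F.map (upHom k T e).op t, F.map (downHom k T e).op t), by
    rw [← FunctorToTypes.map_comp_apply, ← FunctorToTypes.map_comp_apply]
    rfl⟩

/-- The canonical comparison map
`F(T) → F(C̄_r) ×_{∏_{c ∈ v(r)} F(ē)} ∏_{c ∈ v(r)} F(T_{≥c})` of a presheaf of sets on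
`Ω^c_{≤k}`, where `r` is the root of `T`. -/
def rootMap (k : ℕ∞) (F : (OmegaCK k)ᵒᵖ ⥤ Type) (T : OmegaCK k) :
    F.obj (op T) →
      {p : F.obj (op (corObj k T)) ×
          ((c : {x : T.obj.carrier // Minimal (fun y => T.obj.root < y) x}) →
            F.obj (op (upObj k T c.val))) //
        ∀ c : {x : T.obj.carrier // Minimal (fun y => T.obj.root < y) x},
          F.map (edgeToCor k T c.val c.prop).op p.1
            = F.map (edgeToUp k T c.val).op (p.2 c)} :=
  fun t => ⟨(F.map (corHom k T).op t, fun c => F.map (upHom k T c.val).op t), by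
    intro c
    rw [← FunctorToTypes.map_comp_apply, ← FunctorToTypes.map_comp_apply]
    rfl⟩


namespace Seg
open ClosedTree OmegaCK Opposite CategoryTheory

/-- Hom from an order isomorphism of carriers. -/
def homOfOrderIso {S T : ClosedTree} (e : S.carrier ≃o T.carrier) : Hom S T where
  toFun := e
  mono := e.monotone
  indep x y h := ⟨fun hle => h.1 (e.le_iff_le.mp hle), fun hle => h.2 (e.le_iff_le.mp hle)⟩

def isoOfOrderIso {k : ℕ∞} {S T : OmegaCK k} (e : S.obj.carrier ≃o T.obj.carrier) : S ≅ T where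
  hom := ObjectProperty.homMk (homOfOrderIso e)
  inv := ObjectProperty.homMk (homOfOrderIso e.symm)
  hom_inv_id := InducedCategory.hom_ext (Hom.ext (funext fun x => e.symm_apply_apply x))
  inv_hom_id := InducedCategory.hom_ext (Hom.ext (funext fun x => e.apply_symm_apply x))

variable {k : ℕ∞} (F : (OmegaCK k)ᵒᵖ ⥤ Type)

lemma mapc {X Y Z : OmegaCK k} (f : X ⟶ Y) (g : Y ⟶ Z) (t : F.obj (op Z)) :
    F.map (f ≫ g).op t = F.map f.op (F.map g.op t) := by
  rw [op_comp, FunctorToTypes.map_comp_apply]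

lemma cancel₁ {S T : OmegaCK k} (i : S ≅ T) (z : F.obj (op S)) :
    F.map i.hom.op (F.map i.inv.op z) = z := by
  rw [← FunctorToTypes.map_comp_apply, ← op_comp, i.hom_inv_id, op_id, FunctorToTypes.map_id_apply]

lemma cancel₂ {S T : OmegaCK k} (i : S ≅ T) (z : F.obj (op T)) :
    F.map i.inv.op (F.map i.hom.op z) = z := by
  rw [← FunctorToTypes.map_comp_apply, ← op_comp, i.inv_hom_id, op_id, FunctorToTypes.map_id_apply]

lemma mapop_inj {S T : OmegaCK k} (i : S ≅ T) : Function.Injective (F.map i.hom.op) :=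
  fun a b h => by rw [← cancel₂ F i a, h, cancel₂]

lemma mapop_inj₂ {S T : OmegaCK k} (i : S ≅ T) : Function.Injective (F.map i.inv.op) :=
  fun a b h => by rw [← cancel₁ F i a, h, cancel₁]

end Seg
namespace Seg
open ClosedTree OmegaCK Opposite CategoryTheory

variable {T : ClosedTree}

lemma child_eq_of_le {c c' : T.carrier} (hc : Minimal (fun y => T.root < y) c)
    (hc' : Minimal (fun y => T.root < y) c') (h : c ≤ c') : c = c' :=
  le_antisymm h (hc'.2 hc.1 h)

lemma exists_child_le {e : T.carrier} (he : e ≠ T.root) :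
    ∃ c, Minimal (fun y => T.root < y) c ∧ c ≤ e := by
  have hre : T.root < e := lt_of_le_of_ne (T.root_le e) (Ne.symm he)
  obtain ⟨c, hce, hc⟩ := exists_minimal_le_of_wellFoundedLT (fun y => T.root < y) e hre
  exact ⟨c, hc, hce⟩

/-- a child is not strictly above any edge other than the root. -/
lemma not_child_lt {c e : T.carrier} (hc : Minimal (fun y => T.root < y) c)
    (hce : c ≤ e) : ¬ e < c :=
  fun h => absurd (h.trans_le hce) (lt_irrefl e)

/-- an internal-type edge `e ≠ root` is not strictly below any child. -/
lemma not_lt_child {c e : T.carrier} (hc : Minimal (fun y => T.root < y) c)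
    (he : e ≠ T.root) : ¬ e < c := by
  intro h
  have hre : T.root < e := lt_of_le_of_ne (T.root_le e) (Ne.symm he)
  exact absurd (hc.2 hre h.le) (not_le_of_gt h)

/-- minimality above the root transfers between `T^e` and `T`. -/
lemma minimal_down_iff (e : T.carrier) (x : (downTree T e).carrier) :
    Minimal (fun y => (downTree T e).root < y) x ↔ Minimal (fun y => T.root < y) x.val := by
  constructor
  · rintro ⟨h1, h2⟩
    refine ⟨h1, fun y hy hyx => ?_⟩
    have hyc : ¬ e < y := fun hlt => x.prop (hlt.trans_le hyx)
    exact h2 (y := ⟨y, hyc⟩) (Subtype.mk_lt_mk.mpr hy) hyx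
  · rintro ⟨h1, h2⟩
    refine ⟨h1, fun y hy hyx => ?_⟩
    exact h2 (Subtype.coe_lt_coe.mpr hy) hyx

end Seg
namespace Seg2
open ClosedTree OmegaCK Opposite CategoryTheory Seg

variable (T : ClosedTree)

/-- `(T_{≥c})_{≥e} ≅ T_{≥e}` -/
def oiA (c e : T.carrier) (hce : c ≤ e) :
    ((T.upTree c).upTree ⟨e, hce⟩).carrier ≃o (T.upTree e).carrier where
  toFun x := ⟨x.val.val, x.prop⟩
  invFun y := ⟨⟨y.val, hce.trans y.prop⟩, y.prop⟩
  left_inv x := rfl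
  right_inv y := rfl
  map_rel_iff' := Iff.rfl

/-- `(T_{≥c})^e ≅ (T^e)_{≥c}` -/
def oiB (c e : T.carrier) (hce : c ≤ e) :
    ((T.upTree c).downTree ⟨e, hce⟩).carrier ≃o
      ((T.downTree e).upTree ⟨c, fun h => absurd (h.trans_le hce) (lt_irrefl e)⟩).carrier where
  toFun x := ⟨⟨x.val.val, fun h => x.prop (Subtype.coe_lt_coe.mp h)⟩, x.val.prop⟩
  invFun y := ⟨⟨y.val.val, y.prop⟩, fun h => y.val.prop (Subtype.coe_lt_coe.mpr h)⟩
  left_inv x := rfl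
  right_inv y := rfl
  map_rel_iff' := Iff.rfl

/-- `(T^e)_{≥c'} ≅ T_{≥c'}` when nothing above `c'` is above `e`. -/
def oiC (c' e : T.carrier) (h : ∀ x, c' ≤ x → ¬ e < x) :
    ((T.downTree e).upTree ⟨c', h c' le_rfl⟩).carrier ≃o (T.upTree c').carrier where
  toFun x := ⟨x.val.val, x.prop⟩
  invFun y := ⟨⟨y.val, h y.val y.prop⟩, y.prop⟩
  left_inv x := rfl
  right_inv y := rfl
  map_rel_iff' := Iff.rfl

/-- `(T^e)_{≥e} ≅ ē` -/
lemma upDown_val_eq (e : T.carrier) (x : ((T.downTree e).upTree ⟨e, lt_irrefl e⟩).carrier) :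
    x = ⟨⟨e, lt_irrefl e⟩, le_rfl⟩ := by
  have h1 : e ≤ x.val.val := x.prop
  exact Subtype.ext (Subtype.ext ((h1.lt_or_eq).resolve_left x.val.prop).symm)

instance edge_subsingleton : Subsingleton edgeTree.carrier := ⟨fun a b => rfl⟩

instance upDown_subsingleton (e : T.carrier) :
    Subsingleton ((T.downTree e).upTree ⟨e, lt_irrefl e⟩).carrier :=
  ⟨fun a b => (upDown_val_eq T e a).trans (upDown_val_eq T e b).symm⟩

def oiD (e : T.carrier) :
    ((T.downTree e).upTree ⟨e, lt_irrefl e⟩).carrier ≃o edgeTree.carrier where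
  toFun _ := PUnit.unit
  invFun _ := ⟨⟨e, lt_irrefl e⟩, le_rfl⟩
  left_inv x := (upDown_val_eq T e x).symm
  right_inv y := rfl
  map_rel_iff' := by
    intro a b
    constructor
    · intro _; exact le_of_eq (Subsingleton.elim a b)
    · intro _; exact le_of_eq (Subsingleton.elim _ _)


/-- membership condition for corolla edges of `T` inside `T^e`, for `e ≠ root`. -/
lemma cor_mem_down {e x : T.carrier} (he : e ≠ T.root)
    (hx : x = T.root ∨ Minimal (fun y => T.root < y) x) : ¬ e < x := by
  rcases hx with rfl | hx
  · exact fun h => absurd (h.trans_le (T.root_le e)) (lt_irrefl e)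
  · exact not_lt_child hx he

/-- `C̄(T^e) ≅ C̄(T)` for `e ≠ root`. -/
def oiE (e : T.carrier) (he : e ≠ T.root) :
    (corollaTree (T.downTree e)).carrier ≃o (corollaTree T).carrier where
  toFun x := ⟨x.val.val, by
    rcases x.prop with h | h
    · exact Or.inl (congrArg Subtype.val h)
    · exact Or.inr ((minimal_down_iff e x.val).mp h)⟩
  invFun y := ⟨⟨y.val, cor_mem_down T he y.prop⟩, by
    rcases y.prop with h | h
    · exact Or.inl (Subtype.ext h)
    · exact Or.inr ((minimal_down_iff e ⟨y.val, cor_mem_down T he y.prop⟩).mpr h)⟩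
  left_inv x := Subtype.ext (Subtype.ext rfl)
  right_inv y := rfl
  map_rel_iff' := Iff.rfl

/-- `C̄(T) ≅ T` when every edge is the root or a child. -/
def oiF (h : ∀ x : T.carrier, x = T.root ∨ Minimal (fun y => T.root < y) x) :
    (corollaTree T).carrier ≃o T.carrier where
  toFun := Subtype.val
  invFun y := ⟨y, h y⟩
  left_inv x := Subtype.ext rfl
  right_inv y := rfl
  map_rel_iff' := Iff.rfl

lemma up_val_eq_of_isMax {c : T.carrier} (hc : IsMax c) (x : (T.upTree c).carrier) :
    x = ⟨c, le_rfl⟩ :=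
  Subtype.ext (le_antisymm (hc x.prop) x.prop)

/-- `T_{≥c} ≅ ē` when `c` is maximal. -/
def oiG (c : T.carrier) (hc : IsMax c) : (T.upTree c).carrier ≃o edgeTree.carrier where
  toFun _ := PUnit.unit
  invFun _ := ⟨c, le_rfl⟩
  left_inv x := (up_val_eq_of_isMax T hc x).symm
  right_inv y := rfl
  map_rel_iff' := by
    intro a b
    constructor
    · intro _
      exact le_of_eq ((up_val_eq_of_isMax T hc a).trans (up_val_eq_of_isMax T hc b).symm)
    · intro _; exact le_of_eq (Subsingleton.elim _ _)

/-- if every child of `T` is maximal, every edge is the root or a child. -/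
lemma all_cor_of_max (h : ∀ c : T.carrier, Minimal (fun y => T.root < y) c → IsMax c) :
    ∀ x : T.carrier, x = T.root ∨ Minimal (fun y => T.root < y) x := by
  intro x
  by_cases hx : x = T.root
  · exact Or.inl hx
  · obtain ⟨c, hc, hcx⟩ := exists_child_le hx
    have := h c hc hcx
    exact Or.inr (le_antisymm this hcx ▸ hc)

end Seg2
namespace Seg3
open ClosedTree OmegaCK Opposite CategoryTheory Seg Seg2

variable (k : ℕ∞) (T : OmegaCK k)

lemma cond_C {T : ClosedTree} {c' c e : T.carrier} (hc' : Minimal (fun y => T.root < y) c')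
    (hc : Minimal (fun y => T.root < y) c) (hce : c ≤ e) (hne : c' ≠ c) :
    ∀ x, c' ≤ x → ¬ e < x := by
  intro x hx hex
  have hcx : c ≤ x := hce.trans hex.le
  rcases T.below_linear x c c' hcx hx with h | h
  · exact hne (child_eq_of_le hc hc' h).symm
  · exact hne (child_eq_of_le hc' hc h)

lemma card_lt_of_not_isMax {T : OmegaCK k} {c : T.obj.carrier} (h : ¬ IsMax c) :
    Nat.card (downObj k T c).obj.carrier < Nat.card T.obj.carrier := by
  rw [IsMax] at h; push_neg at h
  obtain ⟨b, hcb, hbc⟩ := h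
  exact Finite.card_subtype_lt (p := fun x => ¬ c < x) (x := b)
    (not_not.mpr (lt_of_le_not_ge hcb hbc))

lemma card_up_lt {T : OmegaCK k} {c : T.obj.carrier} (h : c ≠ T.obj.root) :
    Nat.card (upObj k T c).obj.carrier < Nat.card T.obj.carrier :=
  Finite.card_subtype_lt (p := fun x => c ≤ x) (x := T.obj.root)
    (fun hle => h (le_antisymm hle (T.obj.root_le c)))

def isoA (c e : T.obj.carrier) (hce : c ≤ e) :
    upObj k (upObj k T c) ⟨e, hce⟩ ≅ upObj k T e := isoOfOrderIso (oiA T.obj c e hce)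

def isoB (c e : T.obj.carrier) (hce : c ≤ e) :
    downObj k (upObj k T c) ⟨e, hce⟩ ≅
      upObj k (downObj k T e) ⟨c, fun h => absurd (h.trans_le hce) (lt_irrefl e)⟩ :=
  isoOfOrderIso (oiB T.obj c e hce)

def isoC (e c' : T.obj.carrier) (h : ∀ x, c' ≤ x → ¬ e < x) :
    upObj k (downObj k T e) ⟨c', h c' le_rfl⟩ ≅ upObj k T c' :=
  isoOfOrderIso (oiC T.obj c' e h)

def isoD (e : T.obj.carrier) :
    upObj k (downObj k T e) ⟨e, lt_irrefl e⟩ ≅ edgeObj k := isoOfOrderIso (oiD T.obj e)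

def isoE (e : T.obj.carrier) (he : e ≠ T.obj.root) :
    corObj k (downObj k T e) ≅ corObj k T := isoOfOrderIso (oiE T.obj e he)

def isoF (h : ∀ x : T.obj.carrier, x = T.obj.root ∨ Minimal (fun y => T.obj.root < y) x) :
    corObj k T ≅ T := isoOfOrderIso (oiF T.obj h)

def isoG (c : T.obj.carrier) (hc : IsMax c) : upObj k T c ≅ edgeObj k :=
  isoOfOrderIso (oiG T.obj c hc)

/- ### morphism equalities -/

lemma keyF (h) : (isoF k T h).hom = corHom k T := InducedCategory.hom_ext (Hom.ext rfl)

lemma keyG (c : T.obj.carrier) (hc : IsMax c) : (isoG k T c hc).inv = edgeToUp k T c :=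
  InducedCategory.hom_ext (Hom.ext rfl)

lemma key_cor (e : T.obj.carrier) (he : e ≠ T.obj.root) :
    corHom k T = (isoE k T e he).inv ≫ corHom k (downObj k T e) ≫ downHom k T e :=
  InducedCategory.hom_ext (Hom.ext rfl)

lemma key_up (e c' : T.obj.carrier) (h : ∀ x, c' ≤ x → ¬ e < x) (hm : ¬ e < c') :
    upHom k T c' =
      (isoC k T e c' h).inv ≫ upHom k (downObj k T e) ⟨c', hm⟩ ≫ downHom k T e :=
  InducedCategory.hom_ext (Hom.ext rfl)

lemma key3 (c e : T.obj.carrier) (hce : c ≤ e) :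
    upHom k (upObj k T c) ⟨e, hce⟩ ≫ upHom k T c = (isoA k T c e hce).hom ≫ upHom k T e :=
  InducedCategory.hom_ext (Hom.ext rfl)

lemma key5 (c e : T.obj.carrier) (hce : c ≤ e) :
    upHom k T e = (isoA k T c e hce).inv ≫ upHom k (upObj k T c) ⟨e, hce⟩ ≫ upHom k T c :=
  InducedCategory.hom_ext (Hom.ext rfl)

lemma key4 (c e : T.obj.carrier) (hce : c ≤ e) :
    downHom k (upObj k T c) ⟨e, hce⟩ ≫ upHom k T c =
      (isoB k T c e hce).hom ≫
        upHom k (downObj k T e) ⟨c, fun h => absurd (h.trans_le hce) (lt_irrefl e)⟩ ≫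
          downHom k T e :=
  InducedCategory.hom_ext (Hom.ext rfl)

lemma key6 (c e : T.obj.carrier) (hce : c ≤ e) (hm : ¬ e < c) :
    upHom k (downObj k T e) ⟨c, hm⟩ ≫
        downHom k T e =
      (isoB k T c e hce).inv ≫ downHom k (upObj k T c) ⟨e, hce⟩ ≫ upHom k T c :=
  InducedCategory.hom_ext (Hom.ext rfl)

lemma key7 (e : T.obj.carrier) (he : e ≠ T.obj.root) :
    corHom k (downObj k T e) ≫ downHom k T e = (isoE k T e he).hom ≫ corHom k T :=
  InducedCategory.hom_ext (Hom.ext rfl)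

lemma key8 (e c' : T.obj.carrier) (h : ∀ x, c' ≤ x → ¬ e < x) (hm : ¬ e < c') :
    upHom k (downObj k T e) ⟨c', hm⟩ ≫ downHom k T e =
      (isoC k T e c' h).hom ≫ upHom k T c' :=
  InducedCategory.hom_ext (Hom.ext rfl)

lemma key9 (e : T.obj.carrier) (hv : ¬ e < e) :
    upHom k (downObj k T e) ⟨e, hv⟩ ≫ downHom k T e =
      (isoD k T e).hom ≫ edgeToUp k T e ≫ upHom k T e :=
  InducedCategory.hom_ext (Hom.ext (funext fun x => congrArg (fun z => z.val.val) (upDown_val_eq T.obj e x)))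

lemma key10 (c' : T.obj.carrier) (hc' : Minimal (fun y => T.obj.root < y) c') :
    edgeToUp k T c' ≫ upHom k T c' = edgeToCor k T c' hc' ≫ corHom k T :=
  InducedCategory.hom_ext (Hom.ext rfl)

lemma key12 (e c' : T.obj.carrier) (he : e ≠ T.obj.root)
    (hc' : Minimal (fun y => T.obj.root < y) c') (h : ∀ x, c' ≤ x → ¬ e < x) :
    edgeToCor k T c' hc' ≫ (isoE k T e he).inv ≫ corHom k (downObj k T e) =
      edgeToUp k T c' ≫ (isoC k T e c' h).inv ≫ upHom k (downObj k T e) ⟨c', h c' le_rfl⟩ :=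
  InducedCategory.hom_ext (Hom.ext rfl)

lemma key13 (e c' : T.obj.carrier) (h : ∀ x, c' ≤ x → ¬ e < x) (hm : ¬ e < c') :
    edgeToUp k (downObj k T e) ⟨c', hm⟩ ≫ (isoC k T e c' h).hom = edgeToUp k T c' :=
  InducedCategory.hom_ext (Hom.ext rfl)

lemma key15 (e : T.obj.carrier) (hv : ¬ e < e) :
    edgeToUp k (downObj k T e) ⟨e, hv⟩ ≫ (isoD k T e).hom = 𝟙 (edgeObj k) :=
  InducedCategory.hom_ext (Hom.ext rfl)

lemma key16 (e : T.obj.carrier) (hv : ¬ e < e) :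
    edgeToDown k T e =
      edgeToUp k (downObj k T e) ⟨e, hv⟩ ≫ upHom k (downObj k T e) ⟨e, hv⟩ :=
  InducedCategory.hom_ext (Hom.ext rfl)

lemma key_corE (e : T.obj.carrier) (he : e ≠ T.obj.root) (x : (downObj k T e).obj.carrier)
    (hx : Minimal (fun y => (downObj k T e).obj.root < y) x) :
    edgeToCor k (downObj k T e) x hx ≫ (isoE k T e he).hom =
      edgeToCor k T x.val ((minimal_down_iff e x).mp hx) :=
  InducedCategory.hom_ext (Hom.ext rfl)

lemma key14 (c e : T.obj.carrier) (hce : c ≤ e) :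
    edgeToUp k (upObj k T c) ⟨e, hce⟩ ≫ (isoA k T c e hce).hom = edgeToUp k T e :=
  InducedCategory.hom_ext (Hom.ext rfl)

lemma key17 (c e : T.obj.carrier) (hce : c ≤ e) :
    edgeToDown k (upObj k T c) ⟨e, hce⟩ ≫ (isoB k T c e hce).hom ≫
        upHom k (downObj k T e) ⟨c, fun h => absurd (h.trans_le hce) (lt_irrefl e)⟩ =
      edgeToDown k T e :=
  InducedCategory.hom_ext (Hom.ext rfl)

lemma key19 (c e : T.obj.carrier) (hce : c ≤ e) :
    edgeToUp k T c =
      (edgeToUp k (downObj k T e) ⟨c, fun h => absurd (h.trans_le hce) (lt_irrefl e)⟩ ≫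
        (isoB k T c e hce).inv) ≫ downHom k (upObj k T c) ⟨e, hce⟩ :=
  InducedCategory.hom_ext (Hom.ext rfl)


lemma key20 (e : T.obj.carrier) (he : e ≠ T.obj.root)
    (hm : Minimal (fun y => T.obj.root < y) e) :
    edgeToCor k T e hm ≫ (isoE k T e he).inv ≫ corHom k (downObj k T e) =
      edgeToDown k T e :=
  InducedCategory.hom_ext (Hom.ext rfl)

lemma key21 (e : T.obj.carrier) (hv : ¬ e < e) :
    (isoD k T e).hom ≫ edgeToUp k (downObj k T e) ⟨e, hv⟩ =
      𝟙 (upObj k (downObj k T e) ⟨e, lt_irrefl e⟩) :=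
  InducedCategory.hom_ext (Hom.ext (funext fun x => (upDown_val_eq T.obj e x).symm))

lemma key22 (c e : T.obj.carrier) (he : e ≠ T.obj.root) (hm : ¬ e < c)
    (hc : Minimal (fun y => T.obj.root < y) c) :
    edgeToCor k T c hc ≫ (isoE k T e he).inv ≫ corHom k (downObj k T e) =
      edgeToUp k (downObj k T e) ⟨c, hm⟩ ≫ upHom k (downObj k T e) ⟨c, hm⟩ :=
  InducedCategory.hom_ext (Hom.ext rfl)

end Seg3
namespace Seg4
open ClosedTree OmegaCK Opposite CategoryTheory Seg Seg2 Seg3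

variable {k : ℕ∞}

def tp (F : (OmegaCK k)ᵒᵖ ⥤ Type) {X Y : OmegaCK k} (h : X = Y) (w : F.obj (op Y)) :
    F.obj (op X) :=
  cast (congrArg (fun Z : OmegaCK k => F.obj (op Z)) h.symm) w

lemma rootMap_ext (F : (OmegaCK k)ᵒᵖ ⥤ Type) {S : OmegaCK k} {a b : F.obj (op S)}
    (h1 : F.map (corHom k S).op a = F.map (corHom k S).op b)
    (h2 : ∀ c : {x : S.obj.carrier // Minimal (fun y => S.obj.root < y) x},
      F.map (upHom k S c.val).op a = F.map (upHom k S c.val).op b) :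
    rootMap k F S a = rootMap k F S b :=
  Subtype.ext (Prod.ext h1 (funext h2))

lemma dirA (F : (OmegaCK k)ᵒᵖ ⥤ Type)
    (H : ∀ (T : OmegaCK k) (e : T.obj.carrier), e ≠ T.obj.root → ¬ IsMax e →
      Function.Bijective (cutMap k F T e)) :
    ∀ T : OmegaCK k, Function.Bijective (rootMap k F T) := by
  suffices h : ∀ (n : ℕ) (T : OmegaCK k), Nat.card T.obj.carrier ≤ n →
      Function.Bijective (rootMap k F T) from fun T => h _ T le_rfl
  intro n
  induction n with
  | zero =>
    intro T h0
    have : Nonempty T.obj.carrier := ⟨T.obj.root⟩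
    exact absurd (Nat.card_pos.trans_le h0) (lt_irrefl 0)
  | succ n ih =>
    intro T hcard
    by_cases hmax : ∀ c : T.obj.carrier, Minimal (fun y => T.obj.root < y) c → IsMax c
    · -- every child of the root is maximal: `T` is its own corolla
      have hall := all_cor_of_max T.obj hmax
      constructor
      · intro t t' hEq
        have h1 : F.map (corHom k T).op t = F.map (corHom k T).op t' :=
          congrArg (fun z => z.val.1) hEq
        rw [← keyF k T hall] at h1
        calc t = F.map (isoF k T hall).inv.op (F.map (isoF k T hall).hom.op t) :=
              (cancel₂ F _ t).symm
          _ = F.map (isoF k T hall).inv.op (F.map (isoF k T hall).hom.op t') := by rw [h1]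
          _ = t' := cancel₂ F _ t'
      · rintro ⟨⟨p, g⟩, hpg⟩
        refine ⟨F.map (isoF k T hall).inv.op p, Subtype.ext (Prod.ext ?_ ?_)⟩
        · show F.map (corHom k T).op _ = p
          rw [← keyF k T hall]
          exact cancel₁ F _ p
        · funext c
          show F.map (upHom k T c.val).op (F.map (isoF k T hall).inv.op p) = g c
          apply mapop_inj₂ F (isoG k T c.val (hmax c.val c.prop))
          rw [keyG]
          calc F.map (edgeToUp k T c.val).op
                (F.map (upHom k T c.val).op (F.map (isoF k T hall).inv.op p))
              = F.map (edgeToUp k T c.val ≫ upHom k T c.val).op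
                  (F.map (isoF k T hall).inv.op p) := (mapc F _ _ _).symm
            _ = F.map (edgeToCor k T c.val c.prop ≫ corHom k T).op
                  (F.map (isoF k T hall).inv.op p) := by rw [key10]
            _ = F.map (edgeToCor k T c.val c.prop).op
                  (F.map (corHom k T).op (F.map (isoF k T hall).inv.op p)) := mapc F _ _ _
            _ = F.map (edgeToCor k T c.val c.prop).op p := by
                  rw [← keyF k T hall, cancel₁]
            _ = F.map (edgeToUp k T c.val).op (g c) := hpg c
    · -- some child `c` of the root is not maximal: cut at `c`
      push_neg at hmax
      obtain ⟨c, hc, hcmax⟩ := hmax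
      have he : c ≠ T.obj.root := fun h => lt_irrefl _ (h ▸ hc.1)
      have hcut := H T c he hcmax
      have hcard' : Nat.card (downObj k T c).obj.carrier ≤ n :=
        Nat.lt_succ_iff.mp (lt_of_lt_of_le (card_lt_of_not_isMax k hcmax) hcard)
      have hroot' := ih (downObj k T c) hcard'
      -- component extraction helpers
      have e_cor : ∀ s : F.obj (op T),
          F.map (corHom k (downObj k T c)).op (F.map (downHom k T c).op s)
            = F.map (isoE k T c he).hom.op (F.map (corHom k T).op s) := fun s => by
        rw [← mapc, key7 k T c he, mapc]
      have e_upD : ∀ (hv : ¬ c < c) (s : F.obj (op T)),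
          F.map (upHom k (downObj k T c) ⟨c, hv⟩).op (F.map (downHom k T c).op s)
            = F.map (isoD k T c).hom.op
                (F.map (edgeToUp k T c).op (F.map (upHom k T c).op s)) := fun hv s => by
        rw [← mapc, key9 k T c hv, mapc, mapc]
      have e_upC : ∀ (v : T.obj.carrier) (hminT : Minimal (fun y => T.obj.root < y) v)
          (hvc : v ≠ c) (hm : ¬ c < v) (s : F.obj (op T)),
          F.map (upHom k (downObj k T c) ⟨v, hm⟩).op (F.map (downHom k T c).op s)
            = F.map (isoC k T c v (cond_C hminT hc le_rfl hvc)).hom.op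
                (F.map (upHom k T v).op s) := fun v hminT hvc hm s => by
        rw [← mapc, key8 k T c v (cond_C hminT hc le_rfl hvc) hm, mapc]
      constructor
      · -- injectivity
        intro t t' hEq
        have hcor : F.map (corHom k T).op t = F.map (corHom k T).op t' :=
          congrArg (fun z => z.val.1) hEq
        have hu : ∀ (c' : T.obj.carrier) (hc' : Minimal (fun y => T.obj.root < y) c'),
            F.map (upHom k T c').op t = F.map (upHom k T c').op t' :=
          fun c' hc' => congrArg (fun z => z.val.2 ⟨c', hc'⟩) hEq
        have hd : F.map (downHom k T c).op t = F.map (downHom k T c).op t' := by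
          apply hroot'.1
          apply rootMap_ext F
          · rw [e_cor, e_cor, hcor]
          · rintro ⟨⟨v, hv⟩, hmin⟩
            have hminT := (minimal_down_iff c ⟨v, hv⟩).mp hmin
            by_cases hvc : v = c
            · subst hvc
              rw [e_upD hv, e_upD hv, hu v hminT]
            · rw [e_upC v hminT hvc hv, e_upC v hminT hvc hv, hu v hminT]
        exact hcut.1 (Subtype.ext (Prod.ext (hu c hc) hd))
      · -- surjectivity
        rintro ⟨⟨p, g⟩, hpg⟩
        classical
        set w : F.obj (op (upObj k (downObj k T c) ⟨c, lt_irrefl c⟩)) :=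
          F.map (isoD k T c).hom.op (F.map (edgeToUp k T c).op (g ⟨c, hc⟩)) with hw
        set p' : F.obj (op (corObj k (downObj k T c))) :=
          F.map (isoE k T c he).hom.op p with hp'
        set g' : (c'' : {x : (downObj k T c).obj.carrier //
              Minimal (fun y => (downObj k T c).obj.root < y) x}) →
            F.obj (op (upObj k (downObj k T c) c''.val)) := fun c'' =>
          if h : c''.val.val = c then
            tp F (congrArg (fun z => upObj k (downObj k T c) z) (Subtype.ext h)) w
          else
            F.map (isoC k T c c''.val.val
                (cond_C ((minimal_down_iff c c''.val).mp c''.prop) hc le_rfl h)).hom.op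
              (g ⟨c''.val.val, (minimal_down_iff c c''.val).mp c''.prop⟩) with hg'
        have hg'pos : ∀ (hv : ¬ c < c) hmin, g' ⟨⟨c, hv⟩, hmin⟩ = w := by
          intro hv hmin
          simp only [hg']
          rw [dif_pos trivial]
          rfl
        have hg'neg : ∀ (v : T.obj.carrier) (hv : ¬ c < v) hmin (hvc : v ≠ c)
            (hminT : Minimal (fun y => T.obj.root < y) v),
            g' ⟨⟨v, hv⟩, hmin⟩
              = F.map (isoC k T c v (cond_C hminT hc le_rfl hvc)).hom.op (g ⟨v, hminT⟩) := by
          intro v hv hmin hvc hminT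
          simp only [hg']
          rw [dif_neg hvc]
        have hpg' : ∀ c'', F.map (edgeToCor k (downObj k T c) c''.val c''.prop).op p'
            = F.map (edgeToUp k (downObj k T c) c''.val).op (g' c'') := by
          rintro ⟨⟨v, hv⟩, hmin⟩
          have hminT := (minimal_down_iff c ⟨v, hv⟩).mp hmin
          have hL : F.map (edgeToCor k (downObj k T c) ⟨v, hv⟩ hmin).op p'
              = F.map (edgeToCor k T v hminT).op p := by
            rw [hp', ← mapc, key_corE k T c he ⟨v, hv⟩ hmin]
          by_cases hvc : v = c
          · subst hvc
            rw [hL, hg'pos hv hmin, hw, ← mapc, key15 k T v hv, op_id,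
              FunctorToTypes.map_id_apply]
            exact hpg ⟨v, hminT⟩
          · have hg'v : g' ⟨⟨v, hv⟩, hmin⟩
                = F.map (isoC k T c v (cond_C hminT hc le_rfl hvc)).hom.op (g ⟨v, hminT⟩) := by
              simp only [hg']; rw [dif_neg hvc]
            rw [hL, hg'v, ← mapc, key13 k T c v (cond_C hminT hc le_rfl hvc) hv]
            exact hpg ⟨v, hminT⟩
        obtain ⟨b, hb⟩ := hroot'.2 ⟨⟨p', g'⟩, hpg'⟩
        have hbcor : F.map (corHom k (downObj k T c)).op b = p' :=
          congrArg (fun z => z.val.1) hb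
        have hbup : ∀ c'', F.map (upHom k (downObj k T c) c''.val).op b = g' c'' :=
          fun c'' => congrArg (fun z => z.val.2 c'') hb
        have hcompat : F.map (edgeToUp k T c).op (g ⟨c, hc⟩)
            = F.map (edgeToDown k T c).op b := by
          rw [key16 k T c (lt_irrefl c), mapc]
          have := hbup ⟨⟨c, lt_irrefl c⟩, (minimal_down_iff c ⟨c, lt_irrefl c⟩).mpr hc⟩
          rw [this]
          rw [hg'pos (lt_irrefl c) ((minimal_down_iff c ⟨c, lt_irrefl c⟩).mpr hc), hw,
            ← mapc, key15 k T c (lt_irrefl c), op_id, FunctorToTypes.map_id_apply]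
        obtain ⟨t, ht⟩ := hcut.2 ⟨⟨g ⟨c, hc⟩, b⟩, hcompat⟩
        have htu : F.map (upHom k T c).op t = g ⟨c, hc⟩ := congrArg (fun z => z.val.1) ht
        have htd : F.map (downHom k T c).op t = b := congrArg (fun z => z.val.2) ht
        refine ⟨t, Subtype.ext (Prod.ext ?_ ?_)⟩
        · show F.map (corHom k T).op t = p
          rw [key_cor k T c he, mapc, mapc, htd, hbcor, hp']
          exact cancel₂ F _ p
        · funext c'
          obtain ⟨v, hminv⟩ := c'
          show F.map (upHom k T v).op t = g ⟨v, hminv⟩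
          by_cases hvc : v = c
          · subst hvc
            exact htu
          · have hm : ¬ c < v := cond_C hminv hc le_rfl hvc v le_rfl
            rw [key_up k T c v (cond_C hminv hc le_rfl hvc) hm, mapc, mapc, htd]
            have := hbup ⟨⟨v, hm⟩, (minimal_down_iff c ⟨v, hm⟩).mpr hminv⟩
            rw [this]
            rw [hg'neg v hm ((minimal_down_iff c ⟨v, hm⟩).mpr hminv) hvc hminv]
            exact cancel₂ F _ _
        
end Seg4
namespace Seg5
open ClosedTree OmegaCK Opposite CategoryTheory Seg Seg2 Seg3 Seg4

variable {k : ℕ∞}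

lemma dirB (F : (OmegaCK k)ᵒᵖ ⥤ Type)
    (H : ∀ T : OmegaCK k, Function.Bijective (rootMap k F T)) :
    ∀ (T : OmegaCK k) (e : T.obj.carrier), e ≠ T.obj.root → ¬ IsMax e →
      Function.Bijective (cutMap k F T e) := by
  suffices h : ∀ (n : ℕ) (T : OmegaCK k), Nat.card T.obj.carrier ≤ n →
      ∀ e : T.obj.carrier, e ≠ T.obj.root → ¬ IsMax e →
      Function.Bijective (cutMap k F T e) from fun T => h _ T le_rfl
  intro n
  induction n with
  | zero =>
    intro T h0
    have : Nonempty T.obj.carrier := ⟨T.obj.root⟩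
    exact absurd (Nat.card_pos.trans_le h0) (lt_irrefl 0)
  | succ n ih =>
    intro T hcard e he hemax
    obtain ⟨c, hc, hce⟩ := exists_child_le (T := T.obj) he
    classical
    by_cases hec : c = e
    · -- `e` is itself a child of the root
      subst hec
      -- helpers
      have e_cor2 : ∀ s : F.obj (op T), F.map (corHom k T).op s
          = F.map (isoE k T c he).inv.op
              (F.map (corHom k (downObj k T c)).op (F.map (downHom k T c).op s)) := fun s => by
        rw [key_cor k T c he, mapc, mapc]
      have e_corE : ∀ s : F.obj (op T),
          F.map (corHom k (downObj k T c)).op (F.map (downHom k T c).op s)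
            = F.map (isoE k T c he).hom.op (F.map (corHom k T).op s) := fun s => by
        rw [← mapc, key7 k T c he, mapc]
      have e_upD : ∀ (hv : ¬ c < c) (s : F.obj (op T)),
          F.map (upHom k (downObj k T c) ⟨c, hv⟩).op (F.map (downHom k T c).op s)
            = F.map (isoD k T c).hom.op
                (F.map (edgeToUp k T c).op (F.map (upHom k T c).op s)) := fun hv s => by
        rw [← mapc, key9 k T c hv, mapc, mapc]
      have e_upC : ∀ (v : T.obj.carrier) (hminT : Minimal (fun y => T.obj.root < y) v)
          (hvc : v ≠ c) (hm : ¬ c < v) (s : F.obj (op T)),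
          F.map (upHom k (downObj k T c) ⟨v, hm⟩).op (F.map (downHom k T c).op s)
            = F.map (isoC k T c v (cond_C hminT hc le_rfl hvc)).hom.op
                (F.map (upHom k T v).op s) := fun v hminT hvc hm s => by
        rw [← mapc, key8 k T c v (cond_C hminT hc le_rfl hvc) hm, mapc]
      have e_up2 : ∀ (v : T.obj.carrier) (hminT : Minimal (fun y => T.obj.root < y) v)
          (hvc : v ≠ c) (hm : ¬ c < v) (s : F.obj (op T)),
          F.map (upHom k T v).op s
            = F.map (isoC k T c v (cond_C hminT hc le_rfl hvc)).inv.op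
                (F.map (upHom k (downObj k T c) ⟨v, hm⟩).op
                  (F.map (downHom k T c).op s)) := fun v hminT hvc hm s => by
        rw [key_up k T c v (cond_C hminT hc le_rfl hvc) hm, mapc, mapc]
      constructor
      · -- injectivity
        intro t t' hEq
        have hu : F.map (upHom k T c).op t = F.map (upHom k T c).op t' :=
          congrArg (fun z => z.val.1) hEq
        have hd : F.map (downHom k T c).op t = F.map (downHom k T c).op t' :=
          congrArg (fun z => z.val.2) hEq
        apply (H T).1
        apply rootMap_ext F
        · rw [e_cor2, e_cor2, hd]
        · rintro ⟨v, hminv⟩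
          by_cases hvc : v = c
          · subst hvc
            exact hu
          · show F.map (upHom k T v).op t = F.map (upHom k T v).op t'
            rw [e_up2 v hminv hvc (cond_C hminv hc le_rfl hvc v le_rfl),
              e_up2 v hminv hvc (cond_C hminv hc le_rfl hvc v le_rfl), hd]
      · -- surjectivity
        rintro ⟨⟨a, b⟩, hab⟩
        have hab' : F.map (edgeToUp k T c).op a = F.map (edgeToDown k T c).op b := hab
        set p : F.obj (op (corObj k T)) :=
          F.map (isoE k T c he).inv.op (F.map (corHom k (downObj k T c)).op b) with hp
        set g : (c' : {x : T.obj.carrier // Minimal (fun y => T.obj.root < y) x}) →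
            F.obj (op (upObj k T c'.val)) := fun c' =>
          if h : c'.val = c then tp F (congrArg (fun z => upObj k T z) h) a
          else
            F.map (isoC k T c c'.val (cond_C c'.prop hc le_rfl h)).inv.op
              (F.map (upHom k (downObj k T c)
                ⟨c'.val, cond_C c'.prop hc le_rfl h c'.val le_rfl⟩).op b) with hg
        have hgpos : ∀ hminv, g ⟨c, hminv⟩ = a := by
          intro hminv
          simp only [hg]
          rw [dif_pos trivial]
          rfl
        have hgneg : ∀ (v : T.obj.carrier) (hminv : Minimal (fun y => T.obj.root < y) v)
            (hvc : v ≠ c), g ⟨v, hminv⟩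
              = F.map (isoC k T c v (cond_C hminv hc le_rfl hvc)).inv.op
                  (F.map (upHom k (downObj k T c)
                    ⟨v, cond_C hminv hc le_rfl hvc v le_rfl⟩).op b) := by
          intro v hminv hvc
          simp only [hg]
          rw [dif_neg hvc]
        have hpg : ∀ c', F.map (edgeToCor k T c'.val c'.prop).op p
            = F.map (edgeToUp k T c'.val).op (g c') := by
          rintro ⟨v, hminv⟩
          by_cases hvc : v = c
          · subst hvc
            show F.map (edgeToCor k T v hminv).op p = F.map (edgeToUp k T v).op (g ⟨v, hminv⟩)
            rw [hgpos hminv, hp, ← mapc, ← mapc, Category.assoc, key20 k T v he hminv]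
            exact hab'.symm
          · show F.map (edgeToCor k T v hminv).op p = F.map (edgeToUp k T v).op (g ⟨v, hminv⟩)
            rw [hgneg v hminv hvc, hp, ← mapc, ← mapc, Category.assoc,
              key12 k T c v he hminv (cond_C hminv hc le_rfl hvc), mapc, mapc]
        obtain ⟨t, ht⟩ := (H T).2 ⟨⟨p, g⟩, hpg⟩
        have htcor : F.map (corHom k T).op t = p := congrArg (fun z => z.val.1) ht
        have htup : ∀ c', F.map (upHom k T c'.val).op t = g c' :=
          fun c' => congrArg (fun z => z.val.2 c') ht
        have hta : F.map (upHom k T c).op t = a := by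
          have := htup ⟨c, hc⟩
          rwa [hgpos hc] at this
        refine ⟨t, Subtype.ext (Prod.ext hta ?_)⟩
        show F.map (downHom k T c).op t = b
        apply (H (downObj k T c)).1
        apply rootMap_ext F
        · rw [e_corE, htcor, hp, cancel₁]
        · rintro ⟨⟨v, hv⟩, hmin⟩
          have hminT := (minimal_down_iff c ⟨v, hv⟩).mp hmin
          by_cases hvc : v = c
          · subst hvc
            show F.map (upHom k (downObj k T v) ⟨v, hv⟩).op (F.map (downHom k T v).op t)
              = F.map (upHom k (downObj k T v) ⟨v, hv⟩).op b
            rw [e_upD hv, hta, hab', key16 k T v hv, mapc, ← mapc, key21 k T v hv, op_id,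
              FunctorToTypes.map_id_apply]
          · show F.map (upHom k (downObj k T c) ⟨v, hv⟩).op (F.map (downHom k T c).op t)
              = F.map (upHom k (downObj k T c) ⟨v, hv⟩).op b
            rw [e_upC v hminT hvc hv, htup ⟨v, hminT⟩, hgneg v hminT hvc, cancel₁]
    · -- `c < e` : recurse into the branch `T_{≥c}`
      have hcle : c < e := lt_of_le_of_ne hce hec
      have hcroot : c ≠ T.obj.root := fun h => lt_irrefl _ (h ▸ hc.1)
      have hecroot : (⟨e, hce⟩ : (upObj k T c).obj.carrier) ≠ (upObj k T c).obj.root :=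
        fun h => hec (congrArg Subtype.val h).symm
      have hecmax : ¬ IsMax (⟨e, hce⟩ : (upObj k T c).obj.carrier) := by
        intro hmax'
        apply hemax
        intro m hm
        exact hmax' (b := ⟨m, hce.trans hm⟩) hm
      have hcardU : Nat.card (upObj k T c).obj.carrier ≤ n :=
        Nat.lt_succ_iff.mp (lt_of_lt_of_le (card_up_lt k hcroot) hcard)
      have hcutU := ih (upObj k T c) hcardU ⟨e, hce⟩ hecroot hecmax
      have hm_c : ¬ e < c := fun h => absurd (h.trans_le hce) (lt_irrefl e)
      -- helpers
      have e_cor2 : ∀ s : F.obj (op T), F.map (corHom k T).op s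
          = F.map (isoE k T e he).inv.op
              (F.map (corHom k (downObj k T e)).op (F.map (downHom k T e).op s)) := fun s => by
        rw [key_cor k T e he, mapc, mapc]
      have e_corE : ∀ s : F.obj (op T),
          F.map (corHom k (downObj k T e)).op (F.map (downHom k T e).op s)
            = F.map (isoE k T e he).hom.op (F.map (corHom k T).op s) := fun s => by
        rw [← mapc, key7 k T e he, mapc]
      have e_upC : ∀ (v : T.obj.carrier) (hminT : Minimal (fun y => T.obj.root < y) v)
          (hvc : v ≠ c) (hm : ¬ e < v) (s : F.obj (op T)),
          F.map (upHom k (downObj k T e) ⟨v, hm⟩).op (F.map (downHom k T e).op s)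
            = F.map (isoC k T e v (cond_C hminT hc hce hvc)).hom.op
                (F.map (upHom k T v).op s) := fun v hminT hvc hm s => by
        rw [← mapc, key8 k T e v (cond_C hminT hc hce hvc) hm, mapc]
      have e_up2 : ∀ (v : T.obj.carrier) (hminT : Minimal (fun y => T.obj.root < y) v)
          (hvc : v ≠ c) (hm : ¬ e < v) (s : F.obj (op T)),
          F.map (upHom k T v).op s
            = F.map (isoC k T e v (cond_C hminT hc hce hvc)).inv.op
                (F.map (upHom k (downObj k T e) ⟨v, hm⟩).op
                  (F.map (downHom k T e).op s)) := fun v hminT hvc hm s => by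
        rw [key_up k T e v (cond_C hminT hc hce hvc) hm, mapc, mapc]
      have e_upA : ∀ s : F.obj (op T), F.map (upHom k T e).op s
          = F.map (isoA k T c e hce).inv.op
              (F.map (upHom k (upObj k T c) ⟨e, hce⟩).op (F.map (upHom k T c).op s)) :=
        fun s => by rw [key5 k T c e hce, mapc, mapc]
      have e_key3 : ∀ s : F.obj (op T),
          F.map (upHom k (upObj k T c) ⟨e, hce⟩).op (F.map (upHom k T c).op s)
            = F.map (isoA k T c e hce).hom.op (F.map (upHom k T e).op s) := fun s => by
        rw [← mapc, key3 k T c e hce, mapc]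
      have e_key4 : ∀ s : F.obj (op T),
          F.map (downHom k (upObj k T c) ⟨e, hce⟩).op (F.map (upHom k T c).op s)
            = F.map (isoB k T c e hce).hom.op
                (F.map (upHom k (downObj k T e) ⟨c, hm_c⟩).op
                  (F.map (downHom k T e).op s)) := fun s => by
        rw [← mapc, key4 k T c e hce, mapc, mapc]
      have e_key6 : ∀ (hv : ¬ e < c) (s : F.obj (op T)),
          F.map (upHom k (downObj k T e) ⟨c, hv⟩).op (F.map (downHom k T e).op s)
            = F.map (isoB k T c e hce).inv.op
                (F.map (downHom k (upObj k T c) ⟨e, hce⟩).op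
                  (F.map (upHom k T c).op s)) := fun hv s => by
        rw [← mapc, key6 k T c e hce hv, mapc, mapc]
      constructor
      · -- injectivity
        intro t t' hEq
        have hu : F.map (upHom k T e).op t = F.map (upHom k T e).op t' :=
          congrArg (fun z => z.val.1) hEq
        have hd : F.map (downHom k T e).op t = F.map (downHom k T e).op t' :=
          congrArg (fun z => z.val.2) hEq
        apply (H T).1
        apply rootMap_ext F
        · rw [e_cor2, e_cor2, hd]
        · rintro ⟨v, hminv⟩
          by_cases hvc : v = c
          · subst hvc
            show F.map (upHom k T v).op t = F.map (upHom k T v).op t'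
            have hsub : F.map (upHom k T v).op t = F.map (upHom k T v).op t' ∨ True := Or.inr trivial
            apply hcutU.1
            apply Subtype.ext
            apply Prod.ext
            · show F.map (upHom k (upObj k T v) ⟨e, hce⟩).op (F.map (upHom k T v).op t)
                = F.map (upHom k (upObj k T v) ⟨e, hce⟩).op (F.map (upHom k T v).op t')
              rw [e_key3, e_key3, hu]
            · show F.map (downHom k (upObj k T v) ⟨e, hce⟩).op (F.map (upHom k T v).op t)
                = F.map (downHom k (upObj k T v) ⟨e, hce⟩).op (F.map (upHom k T v).op t')
              rw [e_key4, e_key4, hd]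
          · show F.map (upHom k T v).op t = F.map (upHom k T v).op t'
            rw [e_up2 v hminv hvc (cond_C hminv hc hce hvc v le_rfl),
              e_up2 v hminv hvc (cond_C hminv hc hce hvc v le_rfl), hd]
      · -- surjectivity
        rintro ⟨⟨a, b⟩, hab⟩
        have hab' : F.map (edgeToUp k T e).op a = F.map (edgeToDown k T e).op b := hab
        -- step 1: build the branch element
        have h₁ : F.map (edgeToUp k (upObj k T c) ⟨e, hce⟩).op
              (F.map (isoA k T c e hce).hom.op a)
            = F.map (edgeToDown k (upObj k T c) ⟨e, hce⟩).op
                (F.map (isoB k T c e hce).hom.op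
                  (F.map (upHom k (downObj k T e) ⟨c, hm_c⟩).op b)) := by
          rw [← mapc, key14 k T c e hce, ← mapc, ← mapc, Category.assoc, key17 k T c e hce]
          exact hab'
        obtain ⟨x, hx⟩ := hcutU.2 ⟨⟨F.map (isoA k T c e hce).hom.op a,
          F.map (isoB k T c e hce).hom.op
            (F.map (upHom k (downObj k T e) ⟨c, hm_c⟩).op b)⟩, h₁⟩
        have hxu : F.map (upHom k (upObj k T c) ⟨e, hce⟩).op x
            = F.map (isoA k T c e hce).hom.op a := congrArg (fun z => z.val.1) hx
        have hxd : F.map (downHom k (upObj k T c) ⟨e, hce⟩).op x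
            = F.map (isoB k T c e hce).hom.op
                (F.map (upHom k (downObj k T e) ⟨c, hm_c⟩).op b) :=
          congrArg (fun z => z.val.2) hx
        -- step 2: assemble over the root
        set p : F.obj (op (corObj k T)) :=
          F.map (isoE k T e he).inv.op (F.map (corHom k (downObj k T e)).op b) with hp
        set g : (c' : {x : T.obj.carrier // Minimal (fun y => T.obj.root < y) x}) →
            F.obj (op (upObj k T c'.val)) := fun c' =>
          if h : c'.val = c then tp F (congrArg (fun z => upObj k T z) h) x
          else
            F.map (isoC k T e c'.val (cond_C c'.prop hc hce h)).inv.op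
              (F.map (upHom k (downObj k T e)
                ⟨c'.val, cond_C c'.prop hc hce h c'.val le_rfl⟩).op b) with hg
        have hgpos : ∀ hminv, g ⟨c, hminv⟩ = x := by
          intro hminv
          simp only [hg]
          rw [dif_pos trivial]
          rfl
        have hgneg : ∀ (v : T.obj.carrier) (hminv : Minimal (fun y => T.obj.root < y) v)
            (hvc : v ≠ c), g ⟨v, hminv⟩
              = F.map (isoC k T e v (cond_C hminv hc hce hvc)).inv.op
                  (F.map (upHom k (downObj k T e)
                    ⟨v, cond_C hminv hc hce hvc v le_rfl⟩).op b) := by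
          intro v hminv hvc
          simp only [hg]
          rw [dif_neg hvc]
        have hpg : ∀ c', F.map (edgeToCor k T c'.val c'.prop).op p
            = F.map (edgeToUp k T c'.val).op (g c') := by
          rintro ⟨v, hminv⟩
          by_cases hvc : v = c
          · subst hvc
            show F.map (edgeToCor k T v hminv).op p = F.map (edgeToUp k T v).op (g ⟨v, hminv⟩)
            rw [hgpos hminv, hp, ← mapc, ← mapc, Category.assoc, key22 k T v e he hm_c hminv,
              mapc, key19 k T v e hce, mapc, hxd, mapc, cancel₂]
          · show F.map (edgeToCor k T v hminv).op p = F.map (edgeToUp k T v).op (g ⟨v, hminv⟩)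
            rw [hgneg v hminv hvc, hp, ← mapc, ← mapc, Category.assoc,
              key12 k T e v he hminv (cond_C hminv hc hce hvc), mapc, mapc]
        obtain ⟨t, ht⟩ := (H T).2 ⟨⟨p, g⟩, hpg⟩
        have htcor : F.map (corHom k T).op t = p := congrArg (fun z => z.val.1) ht
        have htup : ∀ c', F.map (upHom k T c'.val).op t = g c' :=
          fun c' => congrArg (fun z => z.val.2 c') ht
        have htx : F.map (upHom k T c).op t = x := by
          have := htup ⟨c, hc⟩
          rwa [hgpos hc] at this
        refine ⟨t, Subtype.ext (Prod.ext ?_ ?_)⟩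
        · show F.map (upHom k T e).op t = a
          rw [e_upA, htx, hxu, cancel₂]
        · show F.map (downHom k T e).op t = b
          apply (H (downObj k T e)).1
          apply rootMap_ext F
          · rw [e_corE, htcor, hp, cancel₁]
          · rintro ⟨⟨v, hv⟩, hmin⟩
            have hminT := (minimal_down_iff e ⟨v, hv⟩).mp hmin
            by_cases hvc : v = c
            · subst hvc
              show F.map (upHom k (downObj k T e) ⟨v, hv⟩).op (F.map (downHom k T e).op t)
                = F.map (upHom k (downObj k T e) ⟨v, hv⟩).op b
              rw [e_key6 hv, htx, hxd, cancel₂]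
            · show F.map (upHom k (downObj k T e) ⟨v, hv⟩).op (F.map (downHom k T e).op t)
                = F.map (upHom k (downObj k T e) ⟨v, hv⟩).op b
              rw [e_upC v hminT hvc hv, htup ⟨v, hminT⟩, hgneg v hminT hvc, cancel₁]

end Seg5

/-- for a presheaf of sets `F` on the category of closed `k`-dendroidal
trees, the Segal condition for cutting at internal edges (a) holds iff the Segal
condition for cutting at the root corolla (b) holds. -/
theorem segal_cut_iff_segal_root (k : ℕ∞) (hk : 1 ≤ k) (F : (OmegaCK k)ᵒᵖ ⥤ Type) :
    (∀ (T : OmegaCK k) (e : T.obj.carrier), e ≠ T.obj.root → ¬ IsMax e →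
      Function.Bijective (cutMap k F T e)) ↔
    (∀ T : OmegaCK k, Function.Bijective (rootMap k F T)) := by
  exact ⟨fun H => Seg4.dirA F H, fun H => Seg5.dirB F H⟩
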